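/- A Hall 2'-subgroup of a finite metacyclic group is a normal subgroup. -/

import Mathlib

/-- A group `Y` is metacyclic if it has a cyclic normal subgroup `N`
such that `Y/N` is cyclic. -/
def IsMetacyclic (Y : Type*) [Group Y] : Prop :=
  ∃ N : Subgroup Y, ∃ _ : N.Normal, IsCyclic N ∧ IsCyclic (Y ⧸ N)

/-!
Let `N` be a cyclic normal subgroup with `Y ⧸ N` cyclic. Automorphisms of a cyclic group are
power maps, so every subgroup of `N` is normal in `Y`; in particular `C = H ⊓ N` is, and `N ⧸ C` is
a cyclic 2-group, of order `|H ⊔ N : H|` dividing `|Y : H|`. The automorphism group of a cyclic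
2-group is a 2-group, so the odd-order group `H` acts trivially on `N ⧸ C`; as `C ≤ H`, this means
that `N` normalizes `H`. Thus `H` is a normal Hall subgroup of `H ⊔ N`, which is normal in `Y`
because `Y ⧸ N` is abelian. A normal Hall subgroup contains every element whose order divides its
order, in particular every conjugate of `H`.
-/

theorem IsPGroup.mulAut_of_isCyclic_two {P : Type*} [Group P] [Finite P] [IsCyclic P]
    (hP : IsPGroup 2 P) : IsPGroup 2 (MulAut P) := by
  obtain ⟨n, hn⟩ := (IsPGroup.iff_card (p := 2)).mp hP
  refine IsPGroup.of_card_dvd_pow (n := n) ?_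
  rw [IsCyclic.card_mulAut, hn]
  calc Nat.totient (2 ^ n) ∣ Nat.totient (2 ^ (n + 1)) :=
        Nat.totient_dvd_of_dvd (pow_dvd_pow 2 n.le_succ)
    _ = 2 ^ n := by simp [Nat.totient_prime_pow_succ Nat.prime_two]

theorem IsPGroup.commute_of_odd_orderOf {G : Type*} [Group G] {P : Subgroup G} [P.Normal]
    [Finite P] [IsCyclic P] (hP : IsPGroup 2 P) {x : G} (hx : Odd (orderOf x)) {y : G}
    (hy : y ∈ P) : Commute x y := by
  set φ : MulAut P := MulAut.conjNormal x
  have hφ : φ = 1 := by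
    have hcop : (orderOf φ).Coprime (orderOf x) :=
      hP.mulAut_of_isCyclic_two.orderOf_coprime (Nat.coprime_two_left.mpr hx) φ
    exact orderOf_eq_one_iff.mp (hcop.eq_one_of_dvd (orderOf_map_dvd MulAut.conjNormal x))
  have hfix : x * y * x⁻¹ = y := by
    simpa [φ] using congrArg Subtype.val (DFunLike.congr_fun hφ ⟨y, hy⟩)
  exact mul_inv_eq_iff_eq_mul.mp hfix

namespace Subgroup

variable {G : Type*} [Group G]

theorem normal_of_le_of_isCyclic {N K : Subgroup G} [N.Normal] [IsCyclic N] (hKN : K ≤ N) :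
    K.Normal := by
  refine ⟨fun k hk g => ?_⟩
  obtain ⟨m, hm⟩ := MonoidHom.map_cyclic (MulAut.conjNormal g : MulAut N).toMonoidHom
  have hconj : g * k * g⁻¹ = k ^ m := by
    simpa using congrArg Subtype.val (hm ⟨k, hKN hk⟩)
  rw [hconj]
  exact K.zpow_mem hk m

theorem le_of_coprime_natCard_index {H K : Subgroup G} [K.Normal]
    (hcop : (Nat.card H).Coprime K.index) : H ≤ K :=
  relIndex_eq_one.mp <| Nat.eq_one_of_dvd_coprimes hcop (K.relIndex_dvd_card H)
    (K.relIndex_dvd_index_of_normal H)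

theorem normal_of_normal_subgroupOf_of_coprime {H D : Subgroup G} [hD : D.Normal] (hHD : H ≤ D)
    [(H.subgroupOf D).Normal] (hcop : (Nat.card H).Coprime (H.relIndex D)) : H.Normal := by
  refine ⟨fun x hx g => ?_⟩
  have hconjD : g * x * g⁻¹ ∈ D := hD.conj_mem x (hHD hx) g
  have horder : orderOf (⟨g * x * g⁻¹, hconjD⟩ : D) = orderOf x := by
    rw [orderOf_mk, ← (SemiconjBy.conj_mk g x).orderOf_eq]
  have hle : zpowers (⟨g * x * g⁻¹, hconjD⟩ : D) ≤ H.subgroupOf D :=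
    le_of_coprime_natCard_index <| by
      rw [Nat.card_zpowers, horder]
      exact hcop.coprime_dvd_left (H.orderOf_dvd_natCard hx)
  exact mem_subgroupOf.mp (hle (mem_zpowers _))

theorem normal_sup_of_isMulCommutative_quotient (H : Subgroup G) (N : Subgroup G) [N.Normal]
    [IsMulCommutative (G ⧸ N)] : (H ⊔ N).Normal := by
  rw [← QuotientGroup.ker_mk' N, ← comap_map_eq]
  exact (normal_of_isMulCommutative _).comap _

theorem relIndex_sup_left_of_normal [Finite G] (H N : Subgroup G) [N.Normal] :
    H.relIndex (H ⊔ N) = H.relIndex N := by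
  have h := (relIndex_mul_relIndex (H ⊓ N) H (H ⊔ N) inf_le_left le_sup_left).trans
    (relIndex_mul_relIndex (H ⊓ N) N (H ⊔ N) inf_le_right le_sup_right).symm
  rw [relIndex_sup_right, inf_relIndex_left, inf_relIndex_right, mul_comm (H.relIndex N)] at h
  exact Nat.eq_of_mul_eq_mul_left (Nat.pos_of_ne_zero (N.subgroupOf H).index_ne_zero_of_finite) h

theorem le_normalizer_of_isCyclic_of_odd [Finite G] {N H : Subgroup G} [hN : N.Normal]
    [IsCyclic N] (hodd : Odd (Nat.card H)) (hrel : ∃ j : ℕ, H.relIndex N = 2 ^ j) :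
    N ≤ normalizer H := by
  obtain ⟨j, hj⟩ := hrel
  set C := H ⊓ N
  have : C.Normal := normal_of_le_of_isCyclic inf_le_right
  set f := QuotientGroup.mk' C
  have : (N.map f).Normal := hN.map f (QuotientGroup.mk'_surjective C)
  have : IsCyclic (N.map f) :=
    isCyclic_of_surjective (f.subgroupMap N) (f.subgroupMap_surjective N)
  have h2 : IsPGroup 2 (N.map f) := by
    rintro ⟨_, w, hw, rfl⟩
    have hwC : w ^ 2 ^ j ∈ C := hj ▸ inf_relIndex_right H N ▸ C.pow_relIndex_mem hw
    exact ⟨j, Subtype.ext <| by simpa [f] using (QuotientGroup.eq_one_iff _).mpr hwC⟩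
  refine le_normalizer_iff.mpr fun w hw x hx => ?_
  have hxodd : Odd (orderOf (f x)) :=
    hodd.of_dvd_nat ((orderOf_map_dvd f x).trans (H.orderOf_dvd_natCard hx))
  have hcomm : Commute (f x) (f w) := h2.commute_of_odd_orderOf hxodd ⟨w, hw, rfl⟩
  have hfconj : f x = f (w * x * w⁻¹) := by
    rw [map_mul, map_mul, map_inv, ← hcomm.eq, mul_inv_cancel_right]
  have hC : x⁻¹ * (w * x * w⁻¹) ∈ C := QuotientGroup.eq.mp hfconj
  exact (mul_mem_cancel_left (H.inv_mem hx)).mp (inf_le_left (a := H) hC)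

end Subgroup

open Subgroup in
/-- A Hall 2'-subgroup of a finite metacyclic group is a normal subgroup. -/
theorem hall_two_complement_normal_of_metacyclic
    {Y : Type*} [Group Y] [Finite Y] (hY : IsMetacyclic Y)
    (H : Subgroup Y) (hodd : Odd (Nat.card H)) (hindex : ∃ k : ℕ, H.index = 2 ^ k) :
    H.Normal := by
  obtain ⟨N, hN, hNcyc, hQcyc⟩ := hY
  obtain ⟨k, hk⟩ := hindex
  have hHD : H ≤ H ⊔ N := le_sup_left
  have hrel : H.relIndex (H ⊔ N) ∣ 2 ^ k := hk ▸ relIndex_dvd_index_of_le hHD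
  have hNH : N ≤ normalizer H := by
    refine le_normalizer_of_isCyclic_of_odd hodd ?_
    obtain ⟨j, -, hj⟩ := (Nat.dvd_prime_pow Nat.prime_two).mp hrel
    exact ⟨j, relIndex_sup_left_of_normal H N ▸ hj⟩
  have : (H ⊔ N).Normal := normal_sup_of_isMulCommutative_quotient H N
  have : (H.subgroupOf (H ⊔ N)).Normal :=
    (normal_subgroupOf_iff_le_normalizer hHD).mpr (sup_le le_normalizer hNH)
  exact normal_of_normal_subgroupOf_of_coprime hHD <|
    ((Nat.coprime_two_right.mpr hodd).pow_right k).coprime_dvd_right hrel
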